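/- (Average tender measurement lemma, operation form.) Let {ρ_a : a ∈ A} be a finite family of density operators on a finite-dimensional complex Hilbert space H, let {D_b : b ∈ B} be a POVM on H, let φ : A → B be any map, let P be a probability distribution on A, and let ε̄ > 0 satisfy Σ_{a∈A} P(a)(1 − Tr(ρ_a D_{φ(a)})) ≤ ε̄. Then the quantum operation δ(ρ) = Σ_{b∈B} √(D_b) ρ √(D_b) satisfies Σ_{a∈A} P(a) ‖ρ_a − δ(ρ_a)‖₁ ≤ √(8ε̄) + ε̄. -/

import Mathlib

/-!
With `D = D_{φ(a)}` and `τ = 1 - Tr(ρ D)`, the measured state is `δ(ρ) = √D ρ √D + Y` where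
`Y = ∑_{b ≠ φ(a)} √D_b ρ √D_b` is positive of trace `τ`. The trace norm of a Hermitian `X` is
`Re Tr(U X)` for the unitary `U = sign X`, and for every unitary `U` the Cauchy–Schwarz inequality
for the Hilbert–Schmidt inner product gives `|Tr(U Y)| ≤ Tr Y` and
`Re Tr(U (ρ - √D ρ √D)) ≤ 2√τ` (gentle measurement). So `‖ρ - δ(ρ)‖₁ ≤ 2√τ + τ`, and averaging
over `P` with the concavity of `√` gives `2√ε + ε ≤ √(8ε) + ε`.
-/

open scoped ComplexOrder
noncomputable section

/-- The square root of a positive semidefinite matrix, as defined in the older Mathlib. -/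
def Matrix.PosSemidef.sqrt {n : Type*} [Fintype n] [DecidableEq n] {A : Matrix n n ℂ}
    (hA : A.PosSemidef) : Matrix n n ℂ :=
  hA.1.eigenvectorUnitary.1 * Matrix.diagonal ((↑) ∘ (√·) ∘ hA.1.eigenvalues) *
    (star hA.1.eigenvectorUnitary : Matrix n n ℂ)

def traceNorm {n : Type*} [Fintype n] [DecidableEq n] (A : Matrix n n ℂ) : ℝ :=
  ((Matrix.posSemidef_conjTranspose_mul_self A).sqrt).trace.re

def IsDensity {n : Type*} [Fintype n] (ρ : Matrix n n ℂ) : Prop :=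
  ρ.PosSemidef ∧ ρ.trace = 1

def IsProb {A : Type*} [Fintype A] (P : A → ℝ) : Prop :=
  (∀ a, 0 ≤ P a) ∧ ∑ a, P a = 1

open Matrix Finset

namespace Matrix

variable {n : Type*} [Fintype n] [DecidableEq n]

namespace PosSemidef

open scoped MatrixOrder in
lemma sqrt_eq_cfcSqrt {A : Matrix n n ℂ} (hA : A.PosSemidef) : hA.sqrt = CFC.sqrt A := by
  rw [CFC.sqrt_eq_cfc, cfc_nnreal_eq_real _ A hA.nonneg, hA.1.cfc_eq]
  simp only [IsHermitian.cfc, Unitary.conjStarAlgAut_apply, PosSemidef.sqrt]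
  congr 3
  funext i
  simp [Real.coe_toNNReal', max_eq_left (hA.eigenvalues_nonneg i)]

open scoped MatrixOrder in
lemma posSemidef_sqrt {A : Matrix n n ℂ} (hA : A.PosSemidef) : hA.sqrt.PosSemidef := by
  rw [hA.sqrt_eq_cfcSqrt]
  exact nonneg_iff_posSemidef.mp (CFC.sqrt_nonneg A)

open scoped MatrixOrder in
lemma sqrt_mul_self {A : Matrix n n ℂ} (hA : A.PosSemidef) : hA.sqrt * hA.sqrt = A := by
  rw [hA.sqrt_eq_cfcSqrt]
  exact CFC.sqrt_mul_sqrt_self A hA.nonneg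

open scoped MatrixOrder Matrix.Norms.L2Operator in
lemma posSemidef_sqrt_sub_self {E : Matrix n n ℂ} (hE : E.PosSemidef)
    (hE1 : (1 - E).PosSemidef) : (hE.sqrt - E).PosSemidef := by
  have hS1 : hE.sqrt ≤ 1 := by
    simpa [hE.sqrt_eq_cfcSqrt] using CFC.sqrt_le_sqrt E 1 hE1
  have hSS : hE.sqrt ^ 2 ≤ hE.sqrt ^ 1 :=
    CStarAlgebra.pow_antitone hE.posSemidef_sqrt.nonneg hS1 one_le_two
  rwa [pow_one, sq, hE.sqrt_mul_self] at hSS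

lemma posSemidef_sqrt_mul_mul_sqrt {E ρ : Matrix n n ℂ} (hE : E.PosSemidef)
    (hρ : ρ.PosSemidef) : (hE.sqrt * ρ * hE.sqrt).PosSemidef := by
  simpa only [hE.posSemidef_sqrt.1.eq] using hρ.mul_mul_conjTranspose_same hE.sqrt

lemma trace_sqrt_mul_mul_sqrt {E : Matrix n n ℂ} (hE : E.PosSemidef) (ρ : Matrix n n ℂ) :
    (hE.sqrt * ρ * hE.sqrt).trace = (ρ * E).trace := by
  rw [trace_mul_cycle, hE.sqrt_mul_self, trace_mul_comm]

lemma re_trace_mul_nonneg {A B : Matrix n n ℂ} (hA : A.PosSemidef) (hB : B.PosSemidef) :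
    0 ≤ (A * B).trace.re := by
  rw [← hB.trace_sqrt_mul_mul_sqrt]
  exact (Complex.nonneg_iff.mp (hB.posSemidef_sqrt_mul_mul_sqrt hA).trace_nonneg).1

end PosSemidef

section RCLike

variable {𝕜 : Type*} [RCLike 𝕜]

lemma norm_trace_conjTranspose_mul_le (K L : Matrix n n 𝕜) :
    ‖(Kᴴ * L).trace‖ ≤ √(RCLike.re (Kᴴ * K).trace) * √(RCLike.re (Lᴴ * L).trace) := by
  let _ := toMatrixSeminormedAddCommGroup (1 : Matrix n n 𝕜) PosSemidef.one
  let _ := toMatrixInnerProductSpace (1 : Matrix n n 𝕜) PosSemidef.one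
  have h := norm_inner_le_norm (𝕜 := 𝕜) Lᴴ Kᴴ
  rw [norm_eq_sqrt_re_inner (𝕜 := 𝕜) Lᴴ, norm_eq_sqrt_re_inner (𝕜 := 𝕜) Kᴴ] at h
  change ‖(Kᴴ * 1 * Lᴴᴴ).trace‖
    ≤ √(RCLike.re (Lᴴ * 1 * Lᴴᴴ).trace) * √(RCLike.re (Kᴴ * 1 * Kᴴᴴ).trace) at h
  simp only [conjTranspose_conjTranspose, mul_one] at h
  exact h.trans_eq (mul_comm _ _)

lemma norm_trace_unitary_mul_le {U : Matrix n n 𝕜} (hU : U ∈ unitaryGroup n 𝕜)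
    (K L : Matrix n n 𝕜) :
    ‖(U * (Kᴴ * L)).trace‖ ≤ √(RCLike.re (Kᴴ * K).trace) * √(RCLike.re (Lᴴ * L).trace) := by
  have hKU : ((K * Uᴴ)ᴴ * (K * Uᴴ)).trace = (Kᴴ * K).trace := by
    rw [conjTranspose_mul, conjTranspose_conjTranspose, ← mul_assoc, trace_mul_comm]
    simp only [← mul_assoc]
    rw [← star_eq_conjTranspose, mem_unitaryGroup_iff'.mp hU, one_mul]
  have h := norm_trace_conjTranspose_mul_le (K * Uᴴ) L
  rwa [hKU, conjTranspose_mul, conjTranspose_conjTranspose, mul_assoc] at h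

end RCLike

lemma PosSemidef.norm_trace_unitary_mul_le {U Y : Matrix n n ℂ} (hU : U ∈ unitaryGroup n ℂ)
    (hY : Y.PosSemidef) : ‖(U * Y).trace‖ ≤ Y.trace.re := by
  have hT : hY.sqrtᴴ * hY.sqrt = Y := by rw [hY.posSemidef_sqrt.1.eq, hY.sqrt_mul_self]
  have h := Matrix.norm_trace_unitary_mul_le hU hY.sqrt hY.sqrt
  rwa [hT, RCLike.re_to_complex,
    Real.mul_self_sqrt (Complex.nonneg_iff.mp hY.trace_nonneg).1] at h

open scoped MatrixOrder in
lemma IsHermitian.exists_unitary_re_trace_mul_eq_traceNorm {X : Matrix n n ℂ}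
    (hX : X.IsHermitian) : ∃ U ∈ unitaryGroup n ℂ, (U * X).trace.re = traceNorm X := by
  have hX' : IsSelfAdjoint X := hX
  set sign : ℝ → ℝ := fun x => if 0 ≤ x then 1 else -1
  have hsign : ContinuousOn sign (spectrum ℝ X) := X.finite_real_spectrum.continuousOn _
  refine ⟨cfc sign X, ?_, ?_⟩
  · rw [mem_unitaryGroup_iff, (cfc_predicate sign X : IsSelfAdjoint _).star_eq,
      ← cfc_mul .., ← cfc_one ℝ X]
    exact cfc_congr fun x _ => by by_cases hx : 0 ≤ x <;> simp [sign, hx]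
  · rw [traceNorm, PosSemidef.sqrt_eq_cfcSqrt, ← star_eq_conjTranspose, ← CFC.abs,
      CFC.abs_eq_cfc_norm X]
    calc (cfc sign X * X).trace.re = (cfc sign X * cfc (fun x : ℝ => x) X).trace.re := by
          rw [cfc_id' ℝ X]
      _ = (cfc (‖·‖) X).trace.re := by
          rw [← cfc_mul ..]
          congr 2
          refine cfc_congr fun x _ => ?_
          by_cases hx : 0 ≤ x
          · simp [sign, hx, abs_of_nonneg hx]
          · simp [sign, hx, abs_of_neg (not_le.mp hx)]

lemma posSemidef_one_sub_of_sum_eq_one {n B : Type*} [DecidableEq n] [Fintype B]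
    {D : B → Matrix n n ℂ} (hD : ∀ b, (D b).PosSemidef) (hD1 : ∑ b, D b = 1) (b₀ : B) :
    (1 - D b₀).PosSemidef := by
  classical
  rw [← hD1, ← sum_erase_eq_sub (mem_univ b₀)]
  exact posSemidef_sum _ fun b _ => hD b

end Matrix

section Measurement

variable {n : Type*} [Fintype n] [DecidableEq n]

lemma IsDensity.re_trace_mul_one_sub {ρ : Matrix n n ℂ} (hρ : IsDensity ρ) (E : Matrix n n ℂ) :
    (ρ * (1 - E)).trace.re = 1 - (ρ * E).trace.re := by
  rw [mul_sub, mul_one, trace_sub, Complex.sub_re, hρ.2, Complex.one_re]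

lemma IsDensity.re_trace_mul_le_one {ρ E : Matrix n n ℂ} (hρ : IsDensity ρ)
    (hE1 : (1 - E).PosSemidef) : (ρ * E).trace.re ≤ 1 := by
  linarith [hρ.re_trace_mul_one_sub E, hρ.1.re_trace_mul_nonneg hE1]

lemma IsDensity.re_trace_mul_one_sub_sqrt_mul_self_le {ρ E : Matrix n n ℂ} (hρ : IsDensity ρ)
    (hE : E.PosSemidef) (hE1 : (1 - E).PosSemidef) :
    (ρ * ((1 - hE.sqrt) * (1 - hE.sqrt))).trace.re ≤ 1 - (ρ * E).trace.re := by
  set S := hE.sqrt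
  have hsplit : ρ * ((1 - S) * (1 - S)) = ρ * (1 - E) - (ρ * (S - E) + ρ * (S - E)) := by
    rw [← hE.sqrt_mul_self]; noncomm_ring
  rw [hsplit, trace_sub, trace_add, Complex.sub_re, Complex.add_re, hρ.re_trace_mul_one_sub]
  linarith [hρ.1.re_trace_mul_nonneg (hE.posSemidef_sqrt_sub_self hE1)]

/- With `S = √E` and `ρ = R²`, `ρ - SρS = R · R(1 - S) + (R(1 - S))ᴴ · RS`, and Cauchy–Schwarz
bounds both terms since `‖R(1 - S)‖₂² = Tr ρ(1 - S)² ≤ 1 - Tr ρE`, as `(1 - S)² ≤ 1 - E`. -/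
lemma IsDensity.re_trace_unitary_mul_sub_sqrt_mul_mul_sqrt_le {ρ E U : Matrix n n ℂ}
    (hρ : IsDensity ρ) (hE : E.PosSemidef) (hE1 : (1 - E).PosSemidef)
    (hU : U ∈ unitaryGroup n ℂ) :
    (U * (ρ - hE.sqrt * ρ * hE.sqrt)).trace.re ≤ 2 * √(1 - (ρ * E).trace.re) := by
  set S := hE.sqrt
  set R := hρ.1.sqrt
  have hS : Sᴴ = S := hE.posSemidef_sqrt.1
  have hR : Rᴴ = R := hρ.1.posSemidef_sqrt.1
  have hRR : R * R = ρ := hρ.1.sqrt_mul_self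
  have hnormSq (K : Matrix n n ℂ) (hK : Kᴴ = K) :
      ((R * K)ᴴ * (R * K)).trace = (ρ * (K * K)).trace := by
    rw [conjTranspose_mul, hK, hR, ← hRR, mul_assoc, trace_mul_comm K]
    simp only [mul_assoc]
  have h1S : (1 - S)ᴴ = 1 - S := by rw [conjTranspose_sub, conjTranspose_one, hS]
  have hsplit : ρ - S * ρ * S = R * (R * (1 - S)) + (R * (1 - S))ᴴ * (R * S) := by
    rw [conjTranspose_mul, h1S, hR, ← hRR]; noncomm_ring
  have h1 := norm_trace_unitary_mul_le hU R (R * (1 - S))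
  have h2 := norm_trace_unitary_mul_le hU (R * (1 - S)) (R * S)
  simp only [hnormSq _ h1S, RCLike.re_to_complex] at h1 h2
  rw [hR, hRR, hρ.2, Complex.one_re, Real.sqrt_one, one_mul] at h1
  rw [hnormSq _ hS, hE.sqrt_mul_self] at h2
  have hτ := Real.sqrt_le_sqrt (hρ.re_trace_mul_one_sub_sqrt_mul_self_le hE hE1)
  have hρE : √(ρ * E).trace.re ≤ 1 := Real.sqrt_le_one.mpr (hρ.re_trace_mul_le_one hE1)
  rw [hsplit, mul_add, trace_add, Complex.add_re]
  nlinarith [Complex.re_le_norm (U * (R * (R * (1 - S)))).trace,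
    Complex.re_le_norm (U * ((R * (1 - S))ᴴ * (R * S))).trace,
    Real.sqrt_nonneg (ρ * ((1 - S) * (1 - S))).trace.re]

lemma IsDensity.traceNorm_sub_sum_sqrt_mul_mul_sqrt_le {B : Type*} [Fintype B]
    {ρ : Matrix n n ℂ} (hρ : IsDensity ρ) {D : B → Matrix n n ℂ}
    (hD : ∀ b, (D b).PosSemidef) (hD1 : ∑ b, D b = 1) (b₀ : B) :
    traceNorm (ρ - ∑ b, (hD b).sqrt * ρ * (hD b).sqrt)
      ≤ 2 * √(1 - (ρ * D b₀).trace.re) + (1 - (ρ * D b₀).trace.re) := by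
  classical
  set Y := ∑ b ∈ univ.erase b₀, (hD b).sqrt * ρ * (hD b).sqrt
  have hY : Y.PosSemidef := posSemidef_sum _ fun b _ => (hD b).posSemidef_sqrt_mul_mul_sqrt hρ.1
  have hYtr : Y.trace.re = 1 - (ρ * D b₀).trace.re := by
    simp only [Y, trace_sum, PosSemidef.trace_sqrt_mul_mul_sqrt]
    rw [← trace_sum, ← mul_sum, sum_erase_eq_sub (mem_univ b₀), hD1, hρ.re_trace_mul_one_sub]
  have hsplit : ρ - ∑ b, (hD b).sqrt * ρ * (hD b).sqrt
      = (ρ - (hD b₀).sqrt * ρ * (hD b₀).sqrt) - Y := by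
    rw [← add_sum_erase _ _ (mem_univ b₀)]; abel
  have hherm : (ρ - ∑ b, (hD b).sqrt * ρ * (hD b).sqrt).IsHermitian :=
    hρ.1.1.sub (posSemidef_sum _ fun b _ => (hD b).posSemidef_sqrt_mul_mul_sqrt hρ.1).1
  obtain ⟨U, hU, hUX⟩ := hherm.exists_unitary_re_trace_mul_eq_traceNorm
  rw [← hUX, hsplit, mul_sub, trace_sub, Complex.sub_re]
  have hgentle := hρ.re_trace_unitary_mul_sub_sqrt_mul_mul_sqrt_le (hD b₀)
    (posSemidef_one_sub_of_sum_eq_one hD hD1 b₀) hU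
  linarith [neg_le_of_abs_le (Complex.abs_re_le_norm (U * Y).trace),
    hY.norm_trace_unitary_mul_le hU]

end Measurement

theorem average_tender_measurement_general {d : ℕ} {A B : Type*} [Fintype A] [Fintype B]
    (ρ : A → Matrix (Fin d) (Fin d) ℂ) (hρ : ∀ a, IsDensity (ρ a))
    (D : B → Matrix (Fin d) (Fin d) ℂ) (hD : ∀ b, (D b).PosSemidef)
    (hD1 : ∑ b, D b = 1) (φ : A → B) (P : A → ℝ) (hP : IsProb P)
    (ε : ℝ)
    (h : ∑ a, P a * (1 - (((ρ a) * D (φ a)).trace).re) ≤ ε) :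
    ∑ a, P a * traceNorm (ρ a - ∑ b, (hD b).sqrt * ρ a * (hD b).sqrt)
      ≤ Real.sqrt (8 * ε) + ε := by
  set τ : A → ℝ := fun a => 1 - ((ρ a * D (φ a)).trace).re
  have hτ (a : A) : 0 ≤ τ a :=
    sub_nonneg.mpr ((hρ a).re_trace_mul_le_one (posSemidef_one_sub_of_sum_eq_one hD hD1 (φ a)))
  have hε : 0 ≤ ε := (sum_nonneg fun a _ => mul_nonneg (hP.1 a) (hτ a)).trans h
  have hjensen : ∑ a, P a * √(τ a) ≤ √(∑ a, P a * τ a) := by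
    simpa only [smul_eq_mul] using Real.strictConcaveOn_sqrt.concaveOn.le_map_sum
      (t := univ) (fun a _ => hP.1 a) hP.2 (fun a _ => Set.mem_Ici.mpr (hτ a))
  have h2sqrt : 2 * √ε ≤ √(8 * ε) := by
    rw [Real.le_sqrt (by positivity) (by positivity), mul_pow, Real.sq_sqrt hε]
    linarith
  calc ∑ a, P a * traceNorm (ρ a - ∑ b, (hD b).sqrt * ρ a * (hD b).sqrt)
      ≤ ∑ a, P a * (2 * √(τ a) + τ a) := sum_le_sum fun a _ => mul_le_mul_of_nonneg_left
        ((hρ a).traceNorm_sub_sum_sqrt_mul_mul_sqrt_le hD hD1 (φ a)) (hP.1 a)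
    _ = 2 * ∑ a, P a * √(τ a) + ∑ a, P a * τ a := by
      rw [mul_sum, ← sum_add_distrib]
      exact sum_congr rfl fun a _ => by ring
    _ ≤ √(8 * ε) + ε := by
      linarith [hjensen.trans (Real.sqrt_le_sqrt h)]

theorem average_tender_measurement {d : ℕ} {A B : Type*} [Fintype A] [Fintype B]
    (ρ : A → Matrix (Fin d) (Fin d) ℂ) (hρ : ∀ a, IsDensity (ρ a))
    (D : B → Matrix (Fin d) (Fin d) ℂ) (hD : ∀ b, (D b).PosSemidef)
    (hD1 : ∑ b, D b = 1) (φ : A → B) (P : A → ℝ) (hP : IsProb P)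
    (ε : ℝ) (hε : 0 < ε)
    (h : ∑ a, P a * (1 - (((ρ a) * D (φ a)).trace).re) ≤ ε) :
    ∑ a, P a * traceNorm (ρ a - ∑ b, (hD b).sqrt * ρ a * (hD b).sqrt)
      ≤ Real.sqrt (8 * ε) + ε :=
  average_tender_measurement_general ρ hρ D hD hD1 φ P hP ε h
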